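/- arXiv:0812.2553 — 2 statements merged into one kernel-verified Lean document; each statement's English description precedes it below -/
import Mathlib

section
/- (Multiplication theorem) For every integer p ≥ 0, every odd positive integer m, and every real number x, one has E_p(mx) = m^p · Σ_{s=0}^{m−1} (−1)^س E_p(x + s/m); that is, E_p(mx) = m^p Σ_{s=0}^{m−1} (−1)^s E_p(x + s/m). -/
open Finset

/-- The Euler numbers `E_n`, defined by `E_0 = 1` and the recurrence
`∑_{l=0}^{n} C(n,l) E_l + E_n = 0` for `n ≥ 1`. -/
def eulerNumber : ℕ → ℚ
  | 0 => 1
  | n + 1 => -(∑ l : Fin (n + 1), ((n + 1).choose l : ℚ) * eulerNumber l) / 2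

/-- The Euler polynomials `E_n(x) = ∑_{l=0}^{n} C(n,l) E_l x^{n-l}`. -/
noncomputable def eulerPoly (n : ℕ) (x : ℝ) : ℝ :=
  ∑ l ∈ Finset.range (n + 1), (n.choose l : ℝ) * (eulerNumber l : ℝ) * x ^ (n - l)

/-- The Euler function `Ē_p(x) = (-1)^⌊x⌋ E_p(x - ⌊x⌋)`. -/
noncomputable def eulerFun (p : ℕ) (x : ℝ) : ℝ := (-1 : ℝ) ^ ⌊x⌋ * eulerPoly p (x - ⌊x⌋)

/-- The Dedekind-type DC sum `T_p(h,k) = 2 ∑_{u=1}^{k-1} (-1)^{u-1} (u/k) Ē_p(hu/k)`. -/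
noncomputable def dcSum (p h k : ℕ) : ℝ :=
  2 * ∑ u ∈ Finset.Ico 1 k, (-1 : ℝ) ^ (u - 1) * ((u : ℝ) / k) * eulerFun p (h * u / k)

/-!
The Euler polynomial `E_p` is the only polynomial with `E_p(y + 1) + E_p(y) = 2 y^p`: the
difference of two solutions is antiperiodic, and an antiperiodic polynomial vanishes since
translation preserves its leading coefficient. For odd `m`, the alternating sum
`Q(y) = m^p ∑_{s<m} (-1)^s E_p((y + s)/m)` telescopes under `y ↦ y + 1` to
`Q(y + 1) + Q(y) = m^p (E_p(y/m + 1) + E_p(y/m)) = 2 y^p`, so `Q = E_p`; evaluate at `y = m x`.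
-/

open Polynomial

theorem eulerNumber_succ (n : ℕ) :
    ∑ l ∈ range (n + 2), ((n + 1).choose l : ℚ) * eulerNumber l + eulerNumber (n + 1) = 0 := by
  rw [sum_range_succ, Nat.choose_self, Nat.cast_one, one_mul, eulerNumber,
    Fin.sum_univ_eq_sum_range (fun l => ((n + 1).choose l : ℚ) * eulerNumber l)]
  ring

theorem Finset.sum_range_neg_one_pow_mul_add {R : Type*} [CommRing R] (f : ℕ → R) (n : ℕ) :
    ∑ s ∈ range n, (-1) ^ s * (f (s + 1) + f s) = f 0 - (-1) ^ n * f n := by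
  have h := sum_range_sub (fun s => (-1 : R) ^ s * f s) n
  rw [pow_zero, one_mul] at h
  rw [← neg_sub, ← h, ← sum_neg_distrib]
  refine sum_congr rfl fun s _ => ?_
  ring

theorem Polynomial.eq_zero_of_comp_X_add_C_eq_neg {R : Type*} [Ring R] [Nontrivial R]
    [NoZeroDivisors R] [IsAddTorsionFree R] {D : R[X]} (a : R) (h : D.comp (X + C a) = -D) :
    D = 0 := by
  have hlc := leadingCoeff_comp (p := D) (q := X + C a)
    (by rw [natDegree_X_add_C]; exact one_ne_zero)
  rw [h, leadingCoeff_neg, leadingCoeff_X_add_C, one_pow, mul_one, neg_eq_self] at hlc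
  exact leadingCoeff_eq_zero.mp hlc

noncomputable def eulerPolynomial (n : ℕ) : ℝ[X] :=
  ∑ l ∈ range (n + 1), monomial (n - l) ((n.choose l : ℝ) * eulerNumber l)

theorem eulerPolynomial_eval (n : ℕ) (x : ℝ) : (eulerPolynomial n).eval x = eulerPoly n x := by
  simp [eulerPolynomial, eulerPoly, eval_finsetSum]

theorem eulerPolynomial_eval_zero (n : ℕ) : (eulerPolynomial n).eval 0 = eulerNumber n := by
  rw [eulerPolynomial, eval_finsetSum, sum_range_succ, sum_eq_zero fun l hl => ?_]
  · simp
  · simp [Nat.sub_ne_zero_of_lt (mem_range.mp hl)]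

theorem eulerPolynomial_eval_one_add_eval_zero (n : ℕ) :
    (eulerPolynomial (n + 1)).eval 1 + (eulerPolynomial (n + 1)).eval 0 = 0 := by
  have h : (eulerPolynomial (n + 1)).eval 1 =
      ∑ l ∈ range (n + 2), ((n + 1).choose l : ℝ) * eulerNumber l := by
    simp [eulerPolynomial, eval_finsetSum]
  rw [h, eulerPolynomial_eval_zero]
  exact_mod_cast eulerNumber_succ n

theorem derivative_eulerPolynomial_succ (n : ℕ) :
    derivative (eulerPolynomial (n + 1)) = C ((n : ℝ) + 1) * eulerPolynomial n := by
  simp_rw [eulerPolynomial, derivative_sum, derivative_monomial, Nat.sub_sub, Nat.add_sub_add_right]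
  rw [sum_range_succ, Nat.sub_self, Nat.cast_zero, mul_zero, map_zero, add_zero, mul_sum]
  refine sum_congr rfl fun l _ => ?_
  rw [C_mul_monomial]
  congr 1
  have h : ((n.choose l * (n + 1) : ℕ) : ℝ) = (((n + 1).choose l * (n + 1 - l) : ℕ) : ℝ) := by
    rw [Nat.choose_mul_succ_eq]
  push_cast at h ⊢
  linear_combination (eulerNumber l : ℝ) * h.symm

theorem eulerPolynomial_comp_X_add_one_add (n : ℕ) :
    (eulerPolynomial n).comp (X + 1) + eulerPolynomial n = 2 * X ^ n := by
  induction n with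
  | zero => norm_num [eulerPolynomial, eulerNumber]
  | succ n ih =>
    -- `F' = (n + 1) • (the defect for n)`, and `F(0) = E_{n+1}(1) + E_{n+1}(0) = 0` is the recurrence.
    set F := (eulerPolynomial (n + 1)).comp (X + 1) + eulerPolynomial (n + 1) - 2 * X ^ (n + 1)
    suffices F = 0 from sub_eq_zero.mp this
    have hderiv : derivative F = 0 := by
      simp only [F, derivative_sub, derivative_add, derivative_comp, derivative_eulerPolynomial_succ,
        derivative_X, derivative_one, add_zero, derivative_mul, derivative_ofNat, zero_mul,
        zero_add, derivative_X_pow, mul_comp, C_comp]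
      push_cast
      linear_combination C ((n : ℝ) + 1) * ih
    rw [eq_C_of_derivative_eq_zero hderiv, C_eq_zero, coeff_zero_eq_eval_zero]
    simp [F, eval_comp, eulerPolynomial_eval_one_add_eval_zero]

theorem eulerPoly_add_one_add (n : ℕ) (x : ℝ) :
    eulerPoly n (x + 1) + eulerPoly n x = 2 * x ^ n := by
  simpa [eulerPolynomial_eval, eval_comp] using
    congrArg (eval x) (eulerPolynomial_comp_X_add_one_add n)

theorem eq_eulerPolynomial_of_eval_add_one_add {n : ℕ} {P : ℝ[X]}
    (h : ∀ y, P.eval (y + 1) + P.eval y = 2 * y ^ n) : P = eulerPolynomial n := by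
  refine sub_eq_zero.mp (eq_zero_of_comp_X_add_C_eq_neg 1 (Polynomial.funext fun y => ?_))
  have hE := eulerPoly_add_one_add n y
  simp only [eval_comp, eval_sub, eval_add, eval_X, eval_C, eval_neg, eulerPolynomial_eval]
  linear_combination h y - hE

theorem eulerPoly_alternating_sum_add_one_add {m : ℕ} (hmodd : Odd m) (p : ℕ) (y : ℝ) :
    (m : ℝ) ^ p * ∑ s ∈ range m, (-1) ^ s * eulerPoly p ((y + 1 + s) / m) +
      (m : ℝ) ^ p * ∑ s ∈ range m, (-1) ^ s * eulerPoly p ((y + s) / m) = 2 * y ^ p := by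
  have hm : (m : ℝ) ≠ 0 := Nat.cast_ne_zero.mpr hmodd.pos.ne'
  have htel := sum_range_neg_one_pow_mul_add (fun t : ℕ => eulerPoly p ((y + t) / m)) m
  simp only [Nat.cast_add, Nat.cast_one, Nat.cast_zero, add_zero, hmodd.neg_one_pow] at htel
  rw [← mul_add, ← sum_add_distrib]
  simp only [← mul_add, add_assoc, add_comm (1 : ℝ)] at htel ⊢
  rw [htel, add_div y, div_self hm, neg_one_mul, sub_neg_eq_add, add_comm,
    eulerPoly_add_one_add, div_pow]
  field_simp

theorem eulerPoly_mul_general (p m : ℕ) (hmodd : Odd m) (x : ℝ) :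
    eulerPoly p ((m : ℝ) * x) =
      (m : ℝ) ^ p * ∑ s ∈ Finset.range m, (-1 : ℝ) ^ s * eulerPoly p (x + (s : ℝ) / m) := by
  set Q : ℝ[X] := C ((m : ℝ) ^ p) *
    ∑ s ∈ range m, C ((-1 : ℝ) ^ s) * (eulerPolynomial p).comp (C (m : ℝ)⁻¹ * (X + C (s : ℝ)))
  have hQ (y : ℝ) : Q.eval y = m ^ p * ∑ s ∈ range m, (-1) ^ s * eulerPoly p ((y + s) / m) := by
    simp [Q, eval_finsetSum, eval_comp, eulerPolynomial_eval, div_eq_inv_mul]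
  have hQE : Q = eulerPolynomial p := eq_eulerPolynomial_of_eval_add_one_add fun y => by
    rw [hQ, hQ]
    exact eulerPoly_alternating_sum_add_one_add hmodd p y
  have hm : (m : ℝ) ≠ 0 := Nat.cast_ne_zero.mpr hmodd.pos.ne'
  rw [← eulerPolynomial_eval, ← hQE, hQ]
  congr 1
  refine sum_congr rfl fun s _ => ?_
  field_simp

/-- Multiplication theorem: for odd positive `m`,
`E_p(mx) = m^p ∑_{s=0}^{m−1} (−1)^s E_p(x + s/m)`. -/
theorem eulerPoly_mul (p m : ℕ) (hm : 0 < m) (hmodd : Odd m) (x : ℝ) :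
    eulerPoly p ((m : ℝ) * x) =
      (m : ℝ) ^ p * ∑ s ∈ Finset.range m, (-1 : ℝ) ^ s * eulerPoly p (x + (s : ℝ) / m) :=
  eulerPoly_mul_general p m hmodd x
end

section
/- For every odd integer p ≥ 1, the integral of x·E_p(x) over the unit interval equals ∫_0^1 x E_p(x) dx = 2 E_{p+2} / ((p+1)(p+2)), where E_p(x) is the p-th Euler polynomial and E_{p+2} the (p+2)-th Euler number. -/
open Finset

/-!
`E_n(x)` has derivative `n E_{n-1}(x)`, so `x E_{p+1}(x)/(p+1) - E_{p+2}(x)/((p+1)(p+2))` is an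
antiderivative of `x E_p(x)`. The recurrence gives `E_n(1) = -E_n = -E_n(0)` for `n ≥ 1`, so the
integral is `-E_{p+1}/(p+1) + 2 E_{p+2}/((p+1)(p+2))`, and `E_{p+1} = 0` because `p + 1` is even:
the generating function `F(t) = ∑ E_n tⁿ/n!` satisfies `F(t) (eᵗ + 1) = 2`, hence
`F(t) + F(-t) = 2`.
-/

open PowerSeries

theorem sum_choose_mul_eulerNumber_add (n : ℕ) :
    ∑ l ∈ range (n + 1), (n.choose l : ℚ) * eulerNumber l + eulerNumber n =
      if n = 0 then 2 else 0 := by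
  cases n with
  | zero => norm_num [eulerNumber]
  | succ n =>
    rw [sum_range_succ, Nat.choose_self, Nat.cast_one, one_mul, eulerNumber,
      Fin.sum_univ_eq_sum_range (fun l => ((n + 1).choose l : ℚ) * eulerNumber l)]
    simp only [Nat.add_one_ne_zero, if_false]
    ring

theorem sum_choose_mul_eulerNumber {n : ℕ} (hn : n ≠ 0) :
    ∑ l ∈ range (n + 1), (n.choose l : ℚ) * eulerNumber l = -eulerNumber n := by
  have h := sum_choose_mul_eulerNumber_add n
  rw [if_neg hn] at h
  linear_combination h

noncomputable def eulerPowerSeries : ℚ⟦X⟧ := mk fun n => eulerNumber n / n.factorial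

theorem eulerPowerSeries_mul_exp_add_one : eulerPowerSeries * (exp ℚ + 1) = 2 := by
  ext n
  have hsum : ∑ k ∈ range (n + 1), eulerNumber k / k.factorial * (1 / (n - k).factorial) =
      (∑ k ∈ range (n + 1), (n.choose k : ℚ) * eulerNumber k) / n.factorial := by
    rw [sum_div]
    refine sum_congr rfl fun k hk => ?_
    rw [Nat.cast_choose ℚ (Nat.lt_succ_iff.mp (mem_range.mp hk))]
    field_simp
  rw [mul_add, mul_one, map_add, coeff_mul, Nat.sum_antidiagonal_eq_sum_range_succ_mk]
  simp only [eulerPowerSeries, coeff_exp, coeff_mk, Algebra.algebraMap_self_apply]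
  rw [hsum, ← add_div, sum_choose_mul_eulerNumber_add, ← map_ofNat C 2, coeff_C]
  split_ifs with h <;> simp [h]

theorem eulerPowerSeries_add_evalNegHom : eulerPowerSeries + evalNegHom eulerPowerSeries = 2 := by
  have hneg : evalNegHom eulerPowerSeries * (evalNegHom (exp ℚ) + 1) = 2 := by
    simpa [map_ofNat evalNegHom 2] using congrArg evalNegHom eulerPowerSeries_mul_exp_add_one
  have hexp_ne : exp ℚ + 1 ≠ 0 := fun h => by
    simpa using congrArg constantCoeff h
  refine mul_right_cancel₀ hexp_ne ?_
  -- `exp + 1 = exp * (exp(-X) + 1)`, as `exp * exp(-X) = 1`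
  linear_combination eulerPowerSeries_mul_exp_add_one + exp ℚ * hneg +
    - evalNegHom eulerPowerSeries * exp_mul_exp_neg_eq_one (A := ℚ)

theorem eulerNumber_eq_zero_of_even {n : ℕ} (he : Even n) (hn : n ≠ 0) : eulerNumber n = 0 := by
  have h := congrArg (coeff n) eulerPowerSeries_add_evalNegHom
  rw [← map_ofNat C 2, coeff_C, if_neg hn, map_add] at h
  simp only [eulerPowerSeries, evalNegHom, coeff_rescale, coeff_mk, he.neg_one_pow, one_mul] at h
  have : (n.factorial : ℚ) ≠ 0 := by positivity
  field_simp at h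
  linarith

theorem eulerPoly_apply_zero (n : ℕ) : eulerPoly n 0 = eulerNumber n := by
  rw [eulerPoly, sum_range_succ, Nat.choose_self, Nat.sub_self, pow_zero, Nat.cast_one, one_mul,
    mul_one, add_eq_right]
  exact sum_eq_zero fun l hl => by
    rw [zero_pow (Nat.sub_ne_zero_of_lt (mem_range.mp hl)), mul_zero]

theorem eulerPoly_apply_one {n : ℕ} (hn : n ≠ 0) : eulerPoly n 1 = -eulerNumber n := by
  simp only [eulerPoly, one_pow, mul_one]
  exact_mod_cast sum_choose_mul_eulerNumber hn

theorem continuous_eulerPoly (n : ℕ) : Continuous (eulerPoly n) := by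
  unfold eulerPoly
  fun_prop

theorem hasDerivAt_eulerPoly_succ (n : ℕ) (x : ℝ) :
    HasDerivAt (eulerPoly (n + 1)) ((n + 1) * eulerPoly n x) x := by
  have hsplit : eulerPoly (n + 1) = fun x => eulerNumber (n + 1) +
      ∑ l ∈ range (n + 1), ((n + 1).choose l : ℝ) * eulerNumber l * x ^ (n - l + 1) := by
    funext x
    rw [eulerPoly, sum_range_succ, add_comm]
    simp only [Nat.choose_self, Nat.sub_self, pow_zero, Nat.cast_one, one_mul, mul_one]
    congr 1
    refine sum_congr rfl fun l hl => ?_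
    rw [Nat.sub_add_comm (Nat.lt_succ_iff.mp (mem_range.mp hl))]
  rw [hsplit, eulerPoly, mul_sum]
  refine (HasDerivAt.fun_sum fun l _ => (hasDerivAt_pow _ x).const_mul _).const_add _
    |>.congr_deriv ?_
  refine sum_congr rfl fun l hl => ?_
  have hl : l ≤ n := Nat.lt_succ_iff.mp (mem_range.mp hl)
  have hchoose : (n.choose l : ℝ) * (n + 1) = ((n + 1).choose l) * ((n - l : ℕ) + 1) := by
    exact_mod_cast (Nat.choose_mul_succ_eq n l).trans (by rw [Nat.succ_sub hl])
  simp only [Nat.add_sub_cancel]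
  push_cast
  linear_combination -(eulerNumber l : ℝ) * x ^ (n - l) * hchoose

theorem hasDerivAt_mul_eulerPoly_antideriv (p : ℕ) (x : ℝ) :
    HasDerivAt
      (fun x => x * eulerPoly (p + 1) x / (p + 1) - eulerPoly (p + 2) x / ((p + 1) * (p + 2)))
      (x * eulerPoly p x) x := by
  have h₁ := hasDerivAt_eulerPoly_succ p x
  have h₂ := hasDerivAt_eulerPoly_succ (p + 1) x
  refine (((hasDerivAt_id' x).mul h₁).div_const _).sub (h₂.div_const _) |>.congr_deriv ?_
  push_cast
  field_simp
  ring

theorem integral_zero_one_mul_eulerPoly (p : ℕ) :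
    ∫ x in (0 : ℝ)..1, x * eulerPoly p x =
      -eulerNumber (p + 1) / (p + 1) + 2 * eulerNumber (p + 2) / ((p + 1) * (p + 2)) := by
  rw [intervalIntegral.integral_eq_sub_of_hasDerivAt
    (fun x _ => hasDerivAt_mul_eulerPoly_antideriv p x)
    ((continuous_id.mul (continuous_eulerPoly p)).intervalIntegrable 0 1)]
  simp only [eulerPoly_apply_one (Nat.succ_ne_zero _), eulerPoly_apply_zero]
  ring

theorem integral_mul_eulerPoly_general (p : ℕ) (hpodd : Odd p) :
    ∫ x in (0 : ℝ)..1, x * eulerPoly p x =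
      2 * (eulerNumber (p + 2) : ℝ) / ((p + 1) * (p + 2)) := by
  rw [integral_zero_one_mul_eulerPoly,
    eulerNumber_eq_zero_of_even hpodd.add_one (Nat.succ_ne_zero p)]
  simp

/-- For odd `p ≥ 1`, `∫_0^1 x E_p(x) dx = 2 E_{p+2} / ((p+1)(p+2))`. -/
theorem integral_mul_eulerPoly (p : ℕ) (hp : 1 ≤ p) (hpodd : Odd p) :
    ∫ x in (0 : ℝ)..1, x * eulerPoly p x =
      2 * (eulerNumber (p + 2) : ℝ) / ((p + 1) * (p + 2)) :=
  integral_mul_eulerPoly_general p hpodd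
end
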